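/- arXiv:math/0403184 — 4 statements merged into one kernel-verified Lean document; each statement's English description precedes it below -/
import Mathlib

section
/- Let B be a unital C*-algebra, (A, E) a B-valued C*-noncommutative probability space with E faithful (i.e., E(x*x) = 0 implies x = 0). Then for every x ∈ A, ‖x‖ = limsup_{n→∞} ‖E((x*x)^n)‖^{1/(2n)}. -/
open Filter Topology ComplexStarModule

lemma stmt8_im_norm_le {A : Type*} [NormedRing A] [StarRing A] [CStarRing A]
    [NormedAlgebra ℂ A] [StarModule ℂ A] (z : A) : ‖(ℑ z : A)‖ ≤ ‖z‖ := by
  rw [imaginaryPart_apply_coe]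
  calc ‖-Complex.I • (2 : ℝ)⁻¹ • (z - star z)‖ = (2:ℝ)⁻¹ * ‖z - star z‖ := by
        rw [norm_smul, norm_smul]; simp
    _ ≤ (2:ℝ)⁻¹ * (‖z‖ + ‖star z‖) := by gcongr; exact norm_sub_le _ _
    _ = ‖z‖ := by rw [norm_star]; ring

lemma stmt8_selfadj {A : Type*} [CStarAlgebra A] [Nontrivial A] (E : A →L[ℂ] A)
    (hE1 : E 1 = 1) (hE : ∀ v : A, ‖E v‖ ≤ ‖v‖) {a : A} (ha : IsSelfAdjoint a) :
    IsSelfAdjoint (E a) := by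
  set c : A := (ℑ (E a) : A) with hc
  have hcsa : IsSelfAdjoint c := (ℑ (E a)).property
  have key : ∀ s : ℝ, ‖c + algebraMap ℝ A s‖ ^ 2 ≤ ‖a‖ ^ 2 + s ^ 2 := by
    intro s
    set u : ℂ := Complex.I * s with hu
    have hustar : star u = -u := by
      simp [hu, Complex.star_def, map_mul, Complex.conj_I, Complex.conj_ofReal]
    have h1 : E (a + u • 1) = E a + u • 1 := by
      rw [map_add, map_smul, hE1]
    have h2 : (ℑ (E a + u • (1 : A)) : A) = c + algebraMap ℝ A s := by
      rw [map_add, AddSubgroup.coe_add, imaginaryPart_smul]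
      have : (ℜ (1:A) : A) = 1 := (IsSelfAdjoint.one (R := A)).coe_realPart
      simp [hu, Algebra.algebraMap_eq_smul_one, this,
        (IsSelfAdjoint.one (R := A)).imaginaryPart]
      exact hc.symm
    have h3 : ‖c + algebraMap ℝ A s‖ ≤ ‖a + u • (1:A)‖ := by
      rw [← h2]
      exact (stmt8_im_norm_le _).trans (h1 ▸ hE _)
    have hexp : star (a + u • (1:A)) * (a + u • 1)
        = a * a + (star u * u) • 1 + (u + star u) • a := by
      simp only [star_add, star_smul, star_one, ha.star_eq, add_mul, mul_add, smul_add,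
        smul_mul_assoc, mul_smul_comm, mul_one, one_mul, smul_smul, add_smul]
      rw [mul_comm u (star u)]
      abel
    have huu : star u * u = ((s^2 : ℝ) : ℂ) := by
      rw [hustar, hu]
      push_cast
      ring_nf
      rw [Complex.I_sq]
      ring
    have h4 : ‖a + u • (1:A)‖ ^ 2 ≤ ‖a‖ ^ 2 + s ^ 2 := by
      have he : ‖a + u • (1:A)‖ ^ 2 = ‖star (a + u • (1:A)) * (a + u • 1)‖ := by
        rw [CStarRing.norm_star_mul_self, sq]
      rw [he, hexp, huu, hustar, add_neg_cancel, zero_smul, add_zero]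
      calc ‖a * a + ((s^2:ℝ):ℂ) • (1:A)‖ ≤ ‖a * a‖ + ‖((s^2:ℝ):ℂ) • (1:A)‖ :=
            norm_add_le _ _
        _ ≤ ‖a‖ ^ 2 + s ^ 2 := by
            rw [norm_smul, norm_one, mul_one]
            have : ‖a * a‖ = ‖a‖ ^ 2 := by
              calc ‖a * a‖ = ‖star a * a‖ := by rw [ha.star_eq]
                _ = ‖a‖ ^ 2 := by rw [CStarRing.norm_star_mul_self, sq]
            rw [this]
            have : ‖((s^2:ℝ):ℂ)‖ = s^2 := by
              rw [Complex.norm_real, Real.norm_eq_abs, abs_of_nonneg (sq_nonneg s)]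
            rw [this]

    calc ‖c + algebraMap ℝ A s‖ ^ 2 ≤ ‖a + u • (1:A)‖ ^ 2 := pow_le_pow_left₀ (norm_nonneg _) h3 2
      _ ≤ ‖a‖ ^ 2 + s ^ 2 := h4
  obtain ⟨t, htmem, htabs⟩ : ∃ t, t ∈ spectrum ℝ c ∧ |t| = ‖c‖ := by
    rcases CStarAlgebra.norm_or_neg_norm_mem_spectrum (a := c) hcsa with h | h
    · exact ⟨_, h, abs_of_nonneg (norm_nonneg c)⟩
    · exact ⟨_, h, by simp⟩
  have ht2 : ∀ s : ℝ, (t + s) ^ 2 ≤ ‖a‖ ^ 2 + s ^ 2 := by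
    intro s
    have hmem : t + s ∈ spectrum ℝ (c + algebraMap ℝ A s) := by
      rw [add_comm c, ← spectrum.singleton_add_eq, add_comm t s]
      exact Set.add_mem_add rfl htmem
    have habs : |t + s| ≤ ‖c + algebraMap ℝ A s‖ := by
      have := spectrum.norm_le_norm_of_mem hmem
      rwa [Real.norm_eq_abs] at this
    calc (t + s) ^ 2 = |t + s| ^ 2 := (sq_abs _).symm
      _ ≤ ‖c + algebraMap ℝ A s‖ ^ 2 := by gcongr <;> exact abs_nonneg _
      _ ≤ ‖a‖ ^ 2 + s ^ 2 := key s
  have htzero : t = 0 := by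
    by_contra h0
    have hq : t * (‖a‖ ^ 2 / t) = ‖a‖ ^ 2 := mul_div_cancel₀ _ h0
    have hsq : 0 < t ^ 2 := by positivity
    nlinarith [ht2 (‖a‖ ^ 2 / t), sq_nonneg (‖a‖ ^ 2 / t)]
  have hczero : c = 0 := by
    have : ‖c‖ = 0 := by rw [← htabs, htzero, abs_zero]
    exact norm_eq_zero.mp this
  have hre := realPart_add_I_smul_imaginaryPart (E a)
  rw [← hc, hczero, smul_zero, add_zero] at hre
  exact hre ▸ (ℜ (E a)).property

lemma stmt8_pos {A : Type*} [CStarAlgebra A] [Nontrivial A] [PartialOrder A]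
    [StarOrderedRing A] (E : A →L[ℂ] A)
    (hE1 : E 1 = 1) (hE : ∀ v : A, ‖E v‖ ≤ ‖v‖) {a : A} (ha : 0 ≤ a) :
    0 ≤ E a := by
  have hsa : IsSelfAdjoint a := .of_nonneg ha
  have hEsa : IsSelfAdjoint (E a) := stmt8_selfadj E hE1 hE hsa
  set t : ℝ := ‖a‖ with htdef
  have hEt : E (algebraMap ℝ A t) = algebraMap ℝ A t := by
    rw [Algebra.algebraMap_eq_smul_one, E.map_smul_of_tower, hE1]
  have h1 : ‖a - algebraMap ℝ A t‖ ≤ t := by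
    have hcfc : a - algebraMap ℝ A t = cfc (fun s : ℝ => s - t) a := by
      rw [cfc_sub _ _ a, cfc_id' ℝ a, cfc_const t a]
    rw [hcfc]
    refine norm_cfc_le (norm_nonneg a) fun x hx => ?_
    have hx0 : 0 ≤ x := spectrum_nonneg_of_nonneg ha hx
    have hxt : x ≤ t := by
      have := spectrum.norm_le_norm_of_mem hx
      rwa [Real.norm_eq_abs, abs_of_nonneg hx0] at this
    rw [Real.norm_eq_abs, abs_of_nonpos (by linarith)]
    linarith
  have h2 : ‖E a - algebraMap ℝ A t‖ ≤ t := by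
    calc ‖E a - algebraMap ℝ A t‖ = ‖E (a - algebraMap ℝ A t)‖ := by
          rw [map_sub, hEt]
      _ ≤ ‖a - algebraMap ℝ A t‖ := hE _
      _ ≤ t := h1
  rw [StarOrderedRing.nonneg_iff_spectrum_nonneg (R := ℝ) _ hEsa]
  intro μ hμ
  have hmem : μ - t ∈ spectrum ℝ (E a - algebraMap ℝ A t) := by
    rw [← spectrum.sub_singleton_eq]
    exact Set.sub_mem_sub hμ rfl
  have habs : |μ - t| ≤ t := by
    have := spectrum.norm_le_norm_of_mem hmem
    rw [Real.norm_eq_abs] at this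
    exact this.trans h2
  have := abs_le.mp habs
  linarith [this.1]

lemma stmt8_key {A : Type*} [CStarAlgebra A] [Nontrivial A] [PartialOrder A]
    [StarOrderedRing A] (E : A →L[ℂ] A)
    (hE : ∀ v : A, ‖E v‖ ≤ ‖v‖)
    (hEpos : ∀ {a : A}, 0 ≤ a → 0 ≤ E a)
    (hfaithful : ∀ x : A, E (star x * x) = 0 → x = 0)
    {y : A} (hysa : IsSelfAdjoint y) (hypos : (0:A) ≤ y)
    {c : ℝ} (hc : 0 < c) (hclt : c < ‖y‖) :
    ∃ K : ℝ, 0 < K ∧ ∀ m : ℕ, c ^ m * K ≤ ‖E (y ^ m)‖ := by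
  set ε : ℝ := ‖y‖ - c with hεdef
  have hε : 0 < ε := by simp [hεdef]; linarith
  set h : ℝ → ℝ := fun t => max 0 (min 1 ((t - c) / ε)) with hfun
  have hcont : Continuous h :=
    continuous_const.max (continuous_const.min ((continuous_id.sub continuous_const).div_const ε))
  set z : A := cfc h y with hz
  have hzsa : IsSelfAdjoint z := cfc_predicate h y
  have hzz : star z * z = cfc (fun t => h t * h t) y := by
    rw [hzsa.star_eq, hz, ← cfc_mul h h y hcont.continuousOn hcont.continuousOn]
  have hEmono : ∀ a b : A, a ≤ b → E a ≤ E b := by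
    intro a b hab
    have := hEpos (sub_nonneg.mpr hab)
    rw [map_sub] at this
    exact sub_nonneg.mp this
  set K : ℝ := ‖E (star z * z)‖ with hK
  have hKpos : 0 < K := by
    rcases (norm_nonneg (E (star z * z))).lt_or_eq with hlt | heq
    · exact hlt
    · exfalso
      have hz0 : z = 0 := hfaithful z (norm_eq_zero.mp heq.symm)
      have h1mem : (1:ℝ) ∈ spectrum ℝ z := by
        rw [hz, cfc_map_spectrum (f := h) (a := y) hysa hcont.continuousOn]
        refine ⟨‖y‖, CStarAlgebra.norm_mem_spectrum_of_nonneg hypos, ?_⟩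
        have hne : ‖y‖ - c ≠ 0 := by linarith
        simp [hfun, hεdef, div_self hne]
      rw [hz0, spectrum.zero_eq] at h1mem
      simp at h1mem
  refine ⟨K, hKpos, fun m => ?_⟩
  have hle : cfc (fun t : ℝ => c ^ m * (h t * h t)) y ≤ y ^ m := by
    rw [← cfc_pow_id (R := ℝ) y m hysa]
    refine cfc_mono (fun t ht => ?_) ?_ ?_
    · have ht0 : 0 ≤ t := spectrum_nonneg_of_nonneg hypos ht
      by_cases htc : t ≤ c
      · have hh : h t = 0 := by
          have h2 : (t - c) / ε ≤ 0 :=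
            div_nonpos_of_nonpos_of_nonneg (by linarith) hε.le
          have h3 : min 1 ((t - c) / ε) ≤ 0 := le_trans (min_le_right _ _) h2
          simp [hfun, max_eq_left h3]
        rw [hh]
        simpa using pow_nonneg ht0 m
      · push_neg at htc
        have h1 : h t ≤ 1 := max_le zero_le_one (min_le_left _ _)
        have h0 : 0 ≤ h t := le_max_left _ _
        have hcn : c ^ m ≤ t ^ m := pow_le_pow_left₀ hc.le htc.le m
        calc c ^ m * (h t * h t) ≤ c ^ m * 1 :=
              mul_le_mul_of_nonneg_left (by nlinarith) (pow_nonneg hc.le m)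
          _ = c ^ m := mul_one _
          _ ≤ t ^ m := hcn
    · exact ((continuous_const.mul (hcont.mul hcont)).continuousOn)
    · exact (continuous_pow m).continuousOn
  have hsmul : cfc (fun t : ℝ => c ^ m * (h t * h t)) y = (c ^ m) • (star z * z) := by
    rw [hzz, ← cfc_smul (c ^ m) (fun t => h t * h t) y ((hcont.mul hcont).continuousOn)]
    simp [smul_eq_mul]
  have hnn : (0:A) ≤ cfc (fun t : ℝ => c ^ m * (h t * h t)) y := by
    refine cfc_nonneg fun t ht => ?_
    have h0 : 0 ≤ h t := le_max_left _ _
    positivity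
  have hEnn : (0:A) ≤ E (cfc (fun t : ℝ => c ^ m * (h t * h t)) y) := hEpos hnn
  have hEle := hEmono _ _ hle
  have hnorms : ‖E (cfc (fun t : ℝ => c ^ m * (h t * h t)) y)‖ ≤ ‖E (y ^ m)‖ :=
    CStarAlgebra.norm_le_norm_of_nonneg_of_le hEnn hEle
  calc c ^ m * K = ‖E (cfc (fun t : ℝ => c ^ m * (h t * h t)) y)‖ := by
        rw [hsmul, E.map_smul_of_tower, norm_smul, Real.norm_eq_abs,
          abs_of_nonneg (pow_nonneg hc.le m)]
    _ ≤ ‖E (y ^ m)‖ := hnorms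


/-- Lemma 4.11: in a `B`-valued C*-noncommutative probability space with faithful
conditional expectation `E`, `‖x‖ = limsup ‖E((x*x)ⁿ)‖^{1/(2n)}`. -/
theorem stmt8 {A : Type*} [NormedRing A] [StarRing A] [CStarRing A] [NormedAlgebra ℂ A]
    [CompleteSpace A] [StarModule ℂ A] [NormOneClass A]
    (B : StarSubalgebra ℂ A) (hBclosed : IsClosed (B : Set A))
    (E : A →L[ℂ] A)
    (hrange : ∀ x : A, E x ∈ B)
    (hproj : ∀ b ∈ B, E b = b)
    (hnorm : ‖E‖ = 1)
    (hfaithful : ∀ x : A, E (star x * x) = 0 → x = 0) :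
    ∀ x : A, ‖x‖ =
      Filter.limsup (fun n : ℕ => ‖E ((star x * x) ^ n)‖ ^ ((1:ℝ) / (2 * n))) atTop := by
  letI : CStarAlgebra A := ⟨⟩
  letI := CStarAlgebra.spectralOrder A
  haveI := CStarAlgebra.spectralOrderedRing A
  haveI : Nontrivial A := ⟨1, 0, fun hh => by simpa [hh] using (norm_one (α := A))⟩
  have hE1 : E 1 = 1 := hproj 1 B.one_mem
  have hE : ∀ v : A, ‖E v‖ ≤ ‖v‖ := fun v => by
    have := E.le_opNorm v; rwa [hnorm, one_mul] at this
  have hEpos : ∀ {a : A}, 0 ≤ a → 0 ≤ E a := fun {a} ha => stmt8_pos E hE1 hE ha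
  intro x
  by_cases hx : x = 0
  · subst hx
    have hev : ∀ᶠ n : ℕ in atTop,
        ‖E ((star (0:A) * 0) ^ n)‖ ^ ((1:ℝ)/(2*n)) = (0:ℝ) := by
      filter_upwards [eventually_ge_atTop 1] with n hn
      have hn' : (0:ℝ) < 2 * n := by
        have : (1:ℝ) ≤ n := by exact_mod_cast hn
        linarith
      rw [mul_zero, zero_pow (by omega), map_zero, norm_zero,
        Real.zero_rpow (by positivity)]
    rw [limsup_congr hev, limsup_const, norm_zero]
  · have hxn : 0 < ‖x‖ := norm_pos_iff.mpr hx
    set y : A := star x * x with hy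
    have hysa : IsSelfAdjoint y := IsSelfAdjoint.star_mul_self x
    have hypos : (0:A) ≤ y := star_mul_self_nonneg x
    have hynorm : ‖y‖ = ‖x‖ ^ 2 := by rw [hy, CStarRing.norm_star_mul_self, sq]
    have hy0 : 0 < ‖y‖ := by rw [hynorm]; positivity
    set f : ℕ → ℝ := fun n => ‖E (y ^ n)‖ ^ ((1:ℝ)/(2*n)) with hfdef
    have hxeq : ‖y‖ ^ ((1:ℝ)/2) = ‖x‖ := by
      rw [hynorm, ← Real.rpow_natCast ‖x‖ 2, ← Real.rpow_mul (norm_nonneg x)]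
      norm_num
    have hf0 : ∀ n, 0 ≤ f n := fun n => Real.rpow_nonneg (norm_nonneg _) _
    have hfub : ∀ n : ℕ, 1 ≤ n → f n ≤ ‖x‖ := by
      intro n hn
      have hn' : (0:ℝ) < n := by exact_mod_cast hn
      have h1 : ‖E (y ^ n)‖ ≤ ‖y‖ ^ n := (hE _).trans (norm_pow_le' y (by omega))
      have h2 : f n ≤ (‖y‖ ^ n) ^ ((1:ℝ)/(2*n)) :=
        Real.rpow_le_rpow (norm_nonneg _) h1 (by positivity)
      refine h2.trans_eq ?_
      rw [← Real.rpow_natCast ‖y‖ n, ← Real.rpow_mul hy0.le]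
      have hee : (n:ℝ) * ((1:ℝ)/(2*n)) = 1/2 := by
        field_simp
      rw [hee, hxeq]
    have hbddge : IsBoundedUnder (· ≥ ·) atTop f :=
      isBoundedUnder_of ⟨0, fun n => hf0 n⟩
    have hbddle : IsBoundedUnder (· ≤ ·) atTop f := by
      refine isBoundedUnder_of ⟨max 1 ‖x‖, fun n => ?_⟩
      rcases Nat.eq_zero_or_pos n with h0 | h0
      · subst h0
        have : f 0 = 1 := by
          simp [hfdef]
        rw [this]
        exact le_max_left _ _
      · exact le_max_of_le_right (hfub n h0)
    have hcob : IsCoboundedUnder (· ≤ ·) atTop f := hbddge.isCoboundedUnder_flip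
    have hub : limsup f atTop ≤ ‖x‖ :=
      limsup_le_of_le hcob (eventually_atTop.mpr ⟨1, fun n hn => hfub n hn⟩)
    have hlow : ∀ c : ℝ, 0 < c → c < ‖y‖ → c ^ ((1:ℝ)/2) ≤ limsup f atTop := by
      intro c hc hclt
      obtain ⟨K, hKpos, hKle⟩ := stmt8_key E hE hEpos hfaithful hysa hypos hc hclt
      set g : ℕ → ℝ := fun n => c ^ ((1:ℝ)/2) * K ^ ((1:ℝ)/(2*n)) with hg
      have hgle : ∀ᶠ n in atTop, g n ≤ f n := by
        filter_upwards [eventually_ge_atTop 1] with n hn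
        have hn' : (0:ℝ) < n := by exact_mod_cast hn
        have h2 : (c ^ n * K) ^ ((1:ℝ)/(2*n)) ≤ f n :=
          Real.rpow_le_rpow (by positivity) (hKle n) (by positivity)
        refine le_trans (le_of_eq ?_) h2
        rw [Real.mul_rpow (by positivity) hKpos.le, ← Real.rpow_natCast c n,
          ← Real.rpow_mul hc.le]
        have hnn : (n:ℝ) * ((1:ℝ)/(2*n)) = 1/2 := by
          field_simp
        rw [hg, hnn]
      have hexp : Tendsto (fun n : ℕ => (1:ℝ)/(2*n)) atTop (𝓝 0) := by
        have h1 : Tendsto (fun n : ℕ => 2*(n:ℝ)) atTop atTop :=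
          (tendsto_natCast_atTop_atTop (R := ℝ)).const_mul_atTop two_pos
        have h2 := h1.inv_tendsto_atTop
        refine h2.congr fun n => ?_
        simp [Pi.inv_apply, one_div]
      have hKt : Tendsto (fun n : ℕ => K ^ ((1:ℝ)/(2*n))) atTop (𝓝 1) := by
        have h3 : Tendsto (fun n : ℕ => Real.exp (Real.log K * ((1:ℝ)/(2*n)))) atTop
            (𝓝 (Real.exp (Real.log K * 0))) :=
          (Real.continuous_exp.tendsto _).comp (hexp.const_mul (Real.log K))
        simp only [mul_zero, Real.exp_zero] at h3
        refine h3.congr fun n => ?_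
        rw [← Real.exp_log hKpos, ← Real.exp_mul, Real.exp_log hKpos]
      have hgt : Tendsto g atTop (𝓝 (c ^ ((1:ℝ)/2))) := by
        have h4 := hKt.const_mul (c ^ ((1:ℝ)/2))
        rwa [mul_one] at h4
      have hgcob : IsCoboundedUnder (· ≤ ·) atTop g :=
        (isBoundedUnder_of ⟨0, fun n => by positivity⟩ :
          IsBoundedUnder (· ≥ ·) atTop g).isCoboundedUnder_flip
      calc c ^ ((1:ℝ)/2) = limsup g atTop := (hgt.limsup_eq).symm
        _ ≤ limsup f atTop := limsup_le_limsup hgle hgcob hbddle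
    refine le_antisymm ?_ hub
    have h1 : Tendsto (fun k : ℕ => ((k:ℝ)+2)) atTop atTop :=
      tendsto_atTop_add_const_right _ 2 (tendsto_natCast_atTop_atTop (R := ℝ))
    have h2 : Tendsto (fun k : ℕ => ‖y‖/((k:ℝ)+2)) atTop (𝓝 0) := by
      simpa [div_eq_mul_inv] using h1.inv_tendsto_atTop.const_mul ‖y‖
    have hseq : Tendsto (fun k : ℕ => ‖y‖ - ‖y‖/((k:ℝ)+2)) atTop (𝓝 ‖y‖) := by
      simpa using (tendsto_const_nhds (x := ‖y‖) (f := atTop)).sub h2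
    have hsqrt : Tendsto (fun k : ℕ => (‖y‖ - ‖y‖/((k:ℝ)+2)) ^ ((1:ℝ)/2)) atTop
        (𝓝 (‖y‖ ^ ((1:ℝ)/2))) :=
      ((Real.continuousAt_rpow_const ‖y‖ _ (Or.inl hy0.ne')).tendsto).comp hseq
    rw [← hxeq]
    refine le_of_tendsto hsqrt (Eventually.of_forall fun k => ?_)
    have hk2 : (1:ℝ) < (k:ℝ)+2 := by
      have : (0:ℝ) ≤ (k:ℝ) := Nat.cast_nonneg k
      linarith
    have hd : 0 < ‖y‖/((k:ℝ)+2) := div_pos hy0 (by positivity)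
    have hd2 : ‖y‖/((k:ℝ)+2) < ‖y‖ := div_lt_self hy0 hk2
    exact hlow _ (by linarith) (by linarith)
end

section
/- Let H ∈ L¹([0,1]²) be nonnegative with essentially bounded first coordinate expectation CE₁(H)(x) = ∫₀¹ H(x,y) dy. Let w = √H and let w⁽ⁿ⁾ be the n×n block average of w (constant value n²∫∫ w on each grid square), and set H⁽ⁿ⁾ = (w⁽ⁿ⁾)². Then ‖CE₁(H⁽ⁿ⁾)‖_∞ ≤ ‖CE₁(H)‖_∞ for all n. -/
open MeasureTheory Filter intervalIntegral
open scoped ENNReal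

lemma cs_aux {a b : ℝ} (hab : a ≤ b) {f : ℝ → ℝ}
    (hmf : AEStronglyMeasurable f (volume.restrict (Set.Ioc a b)))
    (hf2 : IntegrableOn (fun t => (f t)^2) (Set.Ioc a b)) :
    (∫ t in a..b, f t)^2 ≤ (b - a) * ∫ t in a..b, (f t)^2 := by
  set μ := volume.restrict (Set.Ioc a b) with hμ
  have hfin : IsFiniteMeasure μ := by
    constructor
    rw [hμ, Measure.restrict_apply_univ, Real.volume_Ioc]
    exact ENNReal.ofReal_lt_top
  rw [intervalIntegral.integral_of_le hab, intervalIntegral.integral_of_le hab]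
  have habs : MemLp (fun t => |f t|) 2 μ := by
    rw [memLp_two_iff_integrable_sq (hmf.norm.congr (Filter.Eventually.of_forall fun t => (Real.norm_eq_abs (f t))))]
    exact hf2.congr (by filter_upwards with t; rw [sq_abs])
  have hone : MemLp (fun _ : ℝ => (1:ℝ)) 2 μ := memLp_const 1
  have hpq : Real.HolderConjugate 2 2 := by
    constructor <;> norm_num
  have hold := MeasureTheory.integral_mul_le_Lp_mul_Lq_of_nonneg hpq
    (f := fun t => |f t|) (g := fun _ => (1:ℝ))
    (Filter.Eventually.of_forall fun t => abs_nonneg _)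
    (Filter.Eventually.of_forall fun t => zero_le_one)
    (by simpa using habs) (by simpa using hone)
  simp only [mul_one] at hold
  have h1 : ∫ t, |f t| ∂μ ≤ (∫ t, (f t)^2 ∂μ) ^ ((1:ℝ)/2) * (b - a) ^ ((1:ℝ)/2) := by
    have e1 : ∫ t, |f t| ^ (2:ℝ) ∂μ = ∫ t, (f t)^2 ∂μ := by
      apply MeasureTheory.integral_congr_ae; filter_upwards with t
      rw [show (2:ℝ) = ((2:ℕ):ℝ) by norm_num, Real.rpow_natCast, sq_abs]
    have e2 : ∫ t, (1:ℝ) ^ (2:ℝ) ∂μ = b - a := by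
      simp [hμ, Real.volume_Ioc, ENNReal.toReal_ofReal (sub_nonneg.mpr hab), hab]
    rw [e1, e2] at hold
    exact hold
  have hI2 : 0 ≤ ∫ t, (f t)^2 ∂μ := integral_nonneg fun t => sq_nonneg _
  have h2 : |∫ t, f t ∂μ| ≤ ∫ t, |f t| ∂μ := by
    simpa [Real.norm_eq_abs] using norm_integral_le_integral_norm (μ := μ) f
  calc (∫ t, f t ∂μ)^2 = |∫ t, f t ∂μ|^2 := (sq_abs _).symm
    _ ≤ (∫ t, |f t| ∂μ)^2 := by
        apply sq_le_sq' <;> [linarith [abs_nonneg (∫ t, f t ∂μ)]; exact h2]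
    _ ≤ ((∫ t, (f t)^2 ∂μ) ^ ((1:ℝ)/2) * (b - a) ^ ((1:ℝ)/2))^2 := by
        apply sq_le_sq'
        · have : 0 ≤ (∫ t, (f t)^2 ∂μ) ^ ((1:ℝ)/2) * (b - a) ^ ((1:ℝ)/2) :=
            mul_nonneg (Real.rpow_nonneg hI2 _) (Real.rpow_nonneg (sub_nonneg.mpr hab) _)
          linarith [abs_nonneg (∫ t, |f t| ∂μ), integral_nonneg (μ := μ) (f := fun t => |f t|) (fun t => abs_nonneg (f t))]
        · exact h1
    _ = (b - a) * ∫ t, (f t)^2 ∂μ := by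
        rw [mul_pow, ← Real.rpow_natCast (_ ^ ((1:ℝ)/2)) 2, ← Real.rpow_natCast (_ ^ ((1:ℝ)/2)) 2,
          ← Real.rpow_mul hI2, ← Real.rpow_mul (sub_nonneg.mpr hab)]
        norm_num [mul_comm]

/-- Lemma 6.5(iii): block averaging does not increase the essential bound of the first
coordinate expectation: with `w = √H`, `w⁽ⁿ⁾` the `n×n` block average of `w` and
`H⁽ⁿ⁾ = (w⁽ⁿ⁾)²`, one has `‖CE₁(H⁽ⁿ⁾)‖_∞ ≤ ‖CE₁(H)‖_∞`. -/
theorem stmt12 (H : ℝ × ℝ → ℝ) (hmeas : Measurable H) (hnonneg : ∀ p, 0 ≤ H p)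
    (hint : Integrable H (volume.restrict (Set.Icc (0:ℝ) 1 ×ˢ Set.Icc (0:ℝ) 1)))
    (hCE1 : eLpNorm (fun x : ℝ => ∫ y in (0:ℝ)..1, H (x, y)) ⊤
      (volume.restrict (Set.Icc (0:ℝ) 1)) < ⊤) :
    ∀ n : ℕ, 1 ≤ n →
      eLpNorm
        (fun x : ℝ => ∫ y in (0:ℝ)..1,
          ((n : ℝ) ^ 2 *
            ∫ s in ((⌊x * n⌋₊ : ℝ) / n)..(((⌊x * n⌋₊ : ℝ) + 1) / n),
              ∫ t in ((⌊y * n⌋₊ : ℝ) / n)..(((⌊y * n⌋₊ : ℝ) + 1) / n),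
                Real.sqrt (H (s, t))) ^ 2)
        ⊤ (volume.restrict (Set.Icc (0:ℝ) 1)) ≤
      eLpNorm (fun x : ℝ => ∫ y in (0:ℝ)..1, H (x, y)) ⊤
        (volume.restrict (Set.Icc (0:ℝ) 1)) := by
  intro n hn
  have hN : (0:ℝ) < n := by exact_mod_cast hn
  have hNne : (n:ℝ) ≠ 0 := hN.ne'
  set I : Set ℝ := Set.Icc (0:ℝ) 1 with hI
  set ν : Measure ℝ := volume.restrict I with hν
  have hνfin : IsFiniteMeasure ν := by
    constructor
    rw [hν, Measure.restrict_apply_univ, hI, Real.volume_Icc]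
    exact ENNReal.ofReal_lt_top
  set w : ℝ × ℝ → ℝ := fun p => Real.sqrt (H p) with hwdef
  have hwmeas : Measurable w := hmeas.sqrt
  have hwnn : ∀ p, 0 ≤ w p := fun p => Real.sqrt_nonneg _
  have hintP : Integrable H (ν.prod ν) := by
    rw [hν, Measure.prod_restrict, ← Measure.volume_eq_prod]; exact hint
  have hwP : Integrable w (ν.prod ν) := by
    refine (by simpa using (integrable_const (1:ℝ)).add hintP : Integrable (fun p => 1 + H p) (ν.prod ν)).mono hwmeas.aestronglyMeasurable ?_
    filter_upwards with p
    have h1 : (0:ℝ) ≤ 1 + H p := by linarith [hnonneg p]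
    rw [Real.norm_eq_abs, abs_of_nonneg (hwnn p), Real.norm_eq_abs, abs_of_nonneg h1]
    have h2 : H p ≤ (1 + H p)^2 := by nlinarith [hnonneg p]
    calc w p = Real.sqrt (H p) := rfl
      _ ≤ Real.sqrt ((1 + H p)^2) := Real.sqrt_le_sqrt h2
      _ = 1 + H p := by rw [Real.sqrt_sq h1]
  -- slice integrability
  have hH1 : ∀ᵐ s ∂ν, Integrable (fun t => H (s, t)) ν := hintP.prod_right_ae
  have hw1 : ∀ᵐ s ∂ν, Integrable (fun t => w (s, t)) ν := hwP.prod_right_ae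
  -- marginal integrability
  have hGint : Integrable (fun s => ∫ t, H (s, t) ∂ν) ν := hintP.integral_prod_left
  -- interval integral over [0,1] equals integral w.r.t. ν
  have hIocIcc : volume.restrict (Set.Ioc (0:ℝ) 1) = ν := by
    rw [hν, hI]; exact Measure.restrict_congr_set Ioc_ae_eq_Icc
  have hGeq : ∀ s : ℝ, (∫ y in (0:ℝ)..1, H (s, y)) = ∫ t, H (s, t) ∂ν := by
    intro s
    rw [intervalIntegral.integral_of_le zero_le_one]
    exact setIntegral_congr_set (by rw [hI]; exact Ioc_ae_eq_Icc)
  set M : ℝ≥0∞ := eLpNorm (fun x : ℝ => ∫ y in (0:ℝ)..1, H (x, y)) ⊤ ν with hM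
  have hMtop : M ≠ ⊤ := hCE1.ne
  set C : ℝ := M.toReal with hC
  have hC0 : 0 ≤ C := ENNReal.toReal_nonneg
  have hGC : ∀ᵐ s ∂ν, (∫ t, H (s, t) ∂ν) ≤ C := by
    have h := ae_le_eLpNormEssSup (f := fun x : ℝ => ∫ y in (0:ℝ)..1, H (x, y)) (μ := ν)
    filter_upwards [h] with s hs
    have h2 : (‖∫ y in (0:ℝ)..1, H (s, y)‖₊ : ℝ≥0∞) ≤ M := by
      rw [hM, eLpNorm_exponent_top]; exact hs
    have h3 : ‖∫ y in (0:ℝ)..1, H (s, y)‖ ≤ C := by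
      have := ENNReal.toReal_mono hMtop h2
      simpa using this
    rw [← hGeq s]
    exact le_trans (le_abs_self _) (by rwa [Real.norm_eq_abs] at h3)
  -- reduce to a.e. pointwise bound
  rw [eLpNorm_exponent_top, eLpNormEssSup]
  refine essSup_le_of_ae_le _ ?_
  have hx1 : ∀ᵐ x ∂ν, x ∈ Set.Ico (0:ℝ) 1 := by
    have h1 : ∀ᵐ x ∂ν, x ∈ I := ae_restrict_mem measurableSet_Icc
    have h2 : ∀ᵐ x ∂ν, x ≠ 1 := by
      refine ae_mono Measure.restrict_le_self ?_
      rw [mem_ae_iff]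
      convert Real.volume_singleton (a := 1) using 2
      ext y; simp
    filter_upwards [h1, h2] with x hx hx1
    rw [hI] at hx
    exact ⟨hx.1, lt_of_le_of_ne hx.2 hx1⟩
  filter_upwards [hx1] with x hx
  set i : ℕ := ⌊x * (n:ℝ)⌋₊ with hi
  have hxn0 : 0 ≤ x * (n:ℝ) := mul_nonneg hx.1 hN.le
  have hilt : i < n := by
    rw [hi, Nat.floor_lt hxn0]
    calc x * (n:ℝ) < 1 * (n:ℝ) := by
          exact mul_lt_mul_of_pos_right hx.2 hN
      _ = n := one_mul _
  set a : ℝ := (i:ℝ)/(n:ℝ) with ha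
  set b : ℝ := ((i:ℝ)+1)/(n:ℝ) with hb
  have hjab : ∀ j : ℕ, (j:ℝ)/(n:ℝ) ≤ ((j:ℝ)+1)/(n:ℝ) := fun j =>
    (div_le_div_iff_of_pos_right hN).mpr (by linarith)
  have hab : a ≤ b := hjab i
  have hsub : ∀ j : ℕ, j < n → Set.Ioc ((j:ℝ)/(n:ℝ)) (((j:ℝ)+1)/(n:ℝ)) ⊆ I := by
    intro j hj
    rw [hI]
    intro t ht
    refine ⟨le_trans (div_nonneg (Nat.cast_nonneg j) hN.le) ht.1.le, le_trans ht.2 ?_⟩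
    rw [div_le_one hN]
    have : (j:ℝ) + 1 ≤ (n:ℝ) := by exact_mod_cast Nat.succ_le_of_lt hj
    linarith
  have hIab : Set.Ioc a b ⊆ I := hsub i hilt
  have haemono : ae (volume.restrict (Set.Ioc a b)) ≤ ae ν := by
    rw [hν]; exact ae_mono (Measure.restrict_mono hIab le_rfl)
  have hslice : ∀ᵐ s ∂(volume.restrict (Set.Ioc a b)),
      Integrable (fun t => H (s, t)) ν ∧ Integrable (fun t => w (s, t)) ν :=
    haemono (hH1.and hw1)
  -- definitions
  set g : ℕ → ℝ → ℝ := fun j s => ∫ t in ((j:ℝ)/(n:ℝ))..(((j:ℝ)+1)/(n:ℝ)), w (s, t) with hg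
  set h : ℕ → ℝ → ℝ := fun j s => ∫ t in ((j:ℝ)/(n:ℝ))..(((j:ℝ)+1)/(n:ℝ)), H (s, t) with hh
  set D : ℕ → ℝ := fun j => ∫ s in a..b, g j s with hD
  set B : ℕ → ℝ := fun j => ∫ s in a..b, h j s with hB
  have hba : b - a = 1/(n:ℝ) := by rw [ha, hb]; field_simp; ring
  have hdc : ∀ j : ℕ, ((j:ℝ)+1)/(n:ℝ) - (j:ℝ)/(n:ℝ) = 1/(n:ℝ) := fun j => by field_simp; ring
  -- measurability
  have hgm : ∀ j, StronglyMeasurable (g j) := by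
    intro j
    have : g j = fun s => ∫ t, w (s, t)
        ∂(volume.restrict (Set.Ioc ((j:ℝ)/(n:ℝ)) (((j:ℝ)+1)/(n:ℝ)))) :=
      funext fun s => intervalIntegral.integral_of_le (hjab j)
    rw [this]
    exact hwmeas.stronglyMeasurable.integral_prod_right'
  have hhm : ∀ j, StronglyMeasurable (h j) := by
    intro j
    have : h j = fun s => ∫ t, H (s, t)
        ∂(volume.restrict (Set.Ioc ((j:ℝ)/(n:ℝ)) (((j:ℝ)+1)/(n:ℝ)))) :=
      funext fun s => intervalIntegral.integral_of_le (hjab j)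
    rw [this]
    exact hmeas.stronglyMeasurable.integral_prod_right'
  -- inner Cauchy-Schwarz
  have hkey : ∀ j, j < n → ∀ᵐ s ∂(volume.restrict (Set.Ioc a b)),
      (g j s)^2 ≤ (1/(n:ℝ)) * h j s := by
    intro j hj
    filter_upwards [hslice] with s hs
    have hHs : IntegrableOn (fun t => H (s, t))
        (Set.Ioc ((j:ℝ)/(n:ℝ)) (((j:ℝ)+1)/(n:ℝ))) volume := by
      have h1 : IntegrableOn (fun t => H (s, t)) I volume := hs.1
      exact h1.mono_set (hsub j hj)
    have hsq : (fun t => (w (s, t))^2) = fun t => H (s, t) := by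
      funext t; rw [hwdef]; exact Real.sq_sqrt (hnonneg _)
    have hcs := cs_aux (hjab j)
      ((hwmeas.comp (measurable_prodMk_left (x := s))).aestronglyMeasurable)
      (f := fun t => w (s, t)) (by rw [hsq]; exact hHs)
    rw [hsq, hdc j] at hcs
    exact hcs
  -- h nonneg and integrable
  have hh0 : ∀ j s, 0 ≤ h j s := by
    intro j s
    exact intervalIntegral.integral_nonneg (hjab j) (fun t _ => hnonneg _)
  have hhint : ∀ j, j < n → IntegrableOn (h j) (Set.Ioc a b) volume := by
    intro j hj
    have hGI : IntegrableOn (fun s => ∫ t, H (s, t) ∂ν) I volume := hGint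
    refine Integrable.mono (μ := volume.restrict (Set.Ioc a b)) (hGI.mono_set hIab) ((hhm j).aestronglyMeasurable) ?_
    filter_upwards [hslice] with s hs
    have hle : h j s ≤ ∫ t, H (s, t) ∂ν := by
      rw [hh]
      simp only []
      rw [intervalIntegral.integral_of_le (hjab j), hν]
      refine setIntegral_mono_set hs.1 ?_ (HasSubset.Subset.eventuallyLE (hsub j hj))
      filter_upwards with t using hnonneg _
    rw [Real.norm_eq_abs, abs_of_nonneg (hh0 j s), Real.norm_eq_abs]
    exact hle.trans (le_abs_self _)
  -- g² integrable
  have hg2int : ∀ j, j < n → IntegrableOn (fun s => (g j s)^2) (Set.Ioc a b) volume := by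
    intro j hj
    refine Integrable.mono' ((hhint j hj).const_mul (1/(n:ℝ)))
      (((hgm j).measurable.pow_const 2).aestronglyMeasurable) ?_
    filter_upwards [hkey j hj] with s hs
    rw [Real.norm_eq_abs, abs_of_nonneg (sq_nonneg _)]
    exact hs
  -- outer Cauchy-Schwarz
  have hDB : ∀ j, j < n → (D j)^2 ≤ (1/(n:ℝ)) * ((1/(n:ℝ)) * B j) := by
    intro j hj
    have hcs := cs_aux hab ((hgm j).aestronglyMeasurable).restrict (hg2int j hj)
    rw [hba] at hcs
    refine le_trans hcs ?_
    have hmono : (∫ s in a..b, (g j s)^2) ≤ ∫ s in a..b, (1/(n:ℝ)) * h j s := by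
      rw [intervalIntegral.integral_of_le hab, intervalIntegral.integral_of_le hab]
      exact integral_mono_ae (hg2int j hj) ((hhint j hj).const_mul _) (hkey j hj)
    have heq : (∫ s in a..b, (1/(n:ℝ)) * h j s) = (1/(n:ℝ)) * B j := by
      rw [hB]; exact intervalIntegral.integral_const_mul _ _
    exact mul_le_mul_of_nonneg_left (by rw [← heq]; exact hmono) (by positivity)
  -- the step function φ
  set φ : ℝ → ℝ := fun y => ((n:ℝ)^2 * ∫ s in a..b,
      ∫ t in ((⌊y * (n:ℝ)⌋₊ : ℝ)/(n:ℝ))..(((⌊y * (n:ℝ)⌋₊ : ℝ)+1)/(n:ℝ)),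
        Real.sqrt (H (s, t)))^2 with hφ
  have hφval : ∀ k : ℕ, ∀ᵐ y : ℝ ∂volume,
      y ∈ Set.Ioc ((k:ℝ)/(n:ℝ)) (((k:ℝ)+1)/(n:ℝ)) → φ y = ((n:ℝ)^2 * D k)^2 := by
    intro k
    have hne : ∀ᵐ y : ℝ ∂volume, y ≠ ((k:ℝ)+1)/(n:ℝ) := by
      have hs : {y : ℝ | ¬ y ≠ ((k:ℝ)+1)/(n:ℝ)} = {((k:ℝ)+1)/(n:ℝ)} := by ext; simp
      rw [ae_iff, hs]
      exact Real.volume_singleton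
    filter_upwards [hne] with y hy hyIoc
    have h1 : (k:ℝ) ≤ y * n := by
      have := hyIoc.1
      rw [div_lt_iff₀ hN] at this
      exact this.le
    have h2 : y * n < (k:ℝ) + 1 := by
      have hlt : y < ((k:ℝ)+1)/(n:ℝ) := lt_of_le_of_ne hyIoc.2 hy
      rw [lt_div_iff₀ hN] at hlt
      exact hlt
    have hfl : ⌊y * (n:ℝ)⌋₊ = k := by
      rw [Nat.floor_eq_iff (le_trans (Nat.cast_nonneg k) h1)]
      exact ⟨h1, h2⟩
    rw [hφ]
    simp only [hfl]
    rfl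
  have hφint : ∀ k : ℕ, IntervalIntegrable φ volume ((k:ℝ)/(n:ℝ)) (((k:ℝ)+1)/(n:ℝ)) := by
    intro k
    rw [intervalIntegrable_iff, Set.uIoc_of_le (hjab k)]
    refine Integrable.congr (f := fun _ : ℝ => ((n:ℝ)^2 * D k)^2)
      (integrableOn_const ?_) ?_
    · rw [Real.volume_Ioc]; exact ENNReal.ofReal_lt_top.ne
    · exact ((ae_restrict_iff' measurableSet_Ioc).mpr ((hφval k).mono
        (fun y hy hmem => (hy hmem).symm)))
  have hφeval : ∀ k : ℕ, (∫ y in ((k:ℝ)/(n:ℝ))..(((k:ℝ)+1)/(n:ℝ)), φ y)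
      = (1/(n:ℝ)) * ((n:ℝ)^2 * D k)^2 := by
    intro k
    rw [intervalIntegral.integral_congr_ae (g := fun _ => ((n:ℝ)^2 * D k)^2)
      (by rw [Set.uIoc_of_le (hjab k)]; exact hφval k)]
    rw [intervalIntegral.integral_const, smul_eq_mul, hdc k]
  have hstep1 : (∫ y in (0:ℝ)..1, φ y)
      = ∑ j ∈ Finset.range n, (1/(n:ℝ)) * ((n:ℝ)^2 * D j)^2 := by
    have hadj := intervalIntegral.sum_integral_adjacent_intervals
      (a := fun k : ℕ => (k:ℝ)/(n:ℝ)) (μ := volume) (f := φ) (n := n)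
      (fun k _ => by simpa [Nat.cast_succ] using hφint k)
    simp only [Nat.cast_zero, zero_div, Nat.cast_succ, div_self hNne] at hadj
    rw [← hadj]
    exact Finset.sum_congr rfl fun k _ => hφeval k
  -- sum over j of B j
  have hhIIeq : ∀ᵐ s ∂(volume.restrict (Set.Ioc a b)),
      (∑ j ∈ Finset.range n, h j s) = ∫ t, H (s, t) ∂ν := by
    filter_upwards [hslice] with s hs
    have hadj := intervalIntegral.sum_integral_adjacent_intervals
      (a := fun k : ℕ => (k:ℝ)/(n:ℝ)) (μ := volume) (f := fun t => H (s, t)) (n := n)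
      (fun k hk => by
        have hii : IntervalIntegrable (fun t => H (s, t)) volume
            ((k:ℝ)/(n:ℝ)) (((k:ℝ)+1)/(n:ℝ)) := by
          rw [intervalIntegrable_iff, Set.uIoc_of_le (hjab k)]
          have h1 : IntegrableOn (fun t => H (s, t)) I volume := hs.1
          exact h1.mono_set (hsub k hk)
        simpa [Nat.cast_succ] using hii)
    simp only [Nat.cast_zero, zero_div, Nat.cast_succ, div_self hNne] at hadj
    rw [← hGeq s, ← hadj]
  have hsumB : (∑ j ∈ Finset.range n, B j) = ∫ s in Set.Ioc a b, ∫ t, H (s, t) ∂ν := by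
    have e1 : ∀ j, B j = ∫ s in Set.Ioc a b, h j s := fun j => by
      simp only [hB]
      exact intervalIntegral.integral_of_le hab
    calc ∑ j ∈ Finset.range n, B j
        = ∑ j ∈ Finset.range n, ∫ s in Set.Ioc a b, h j s :=
          Finset.sum_congr rfl fun j _ => e1 j
      _ = ∫ s in Set.Ioc a b, ∑ j ∈ Finset.range n, h j s :=
          (integral_finset_sum _ (fun j hj => hhint j (Finset.mem_range.mp hj))).symm
      _ = ∫ s in Set.Ioc a b, ∫ t, H (s, t) ∂ν := MeasureTheory.integral_congr_ae hhIIeq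
  -- bound the strip integral by C/n
  have hstrip : (∫ s in Set.Ioc a b, ∫ t, H (s, t) ∂ν) ≤ (1/(n:ℝ)) * C := by
    have hGI : IntegrableOn (fun s => ∫ t, H (s, t) ∂ν) I volume := hGint
    have h1 : (∫ s in Set.Ioc a b, ∫ t, H (s, t) ∂ν) ≤ ∫ _ in Set.Ioc a b, C :=
      integral_mono_ae (hGI.mono_set hIab)
        (integrableOn_const (by rw [Real.volume_Ioc]; exact ENNReal.ofReal_lt_top.ne))
        (haemono hGC)
    refine h1.trans ?_
    rw [setIntegral_const, Real.volume_real_Ioc, smul_eq_mul,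
      max_eq_left (by linarith : (0:ℝ) ≤ b - a), hba]
  -- put everything together
  have hFC : (∫ y in (0:ℝ)..1, φ y) ≤ C := by
    rw [hstep1]
    calc ∑ j ∈ Finset.range n, (1/(n:ℝ)) * ((n:ℝ)^2 * D j)^2
        ≤ ∑ j ∈ Finset.range n, (n:ℝ) * B j := by
          refine Finset.sum_le_sum fun j hj => ?_
          have hj' := Finset.mem_range.mp hj
          have hD2 := hDB j hj'
          have hn4 : (0:ℝ) < (n:ℝ)^3 := by positivity
          calc (1/(n:ℝ)) * ((n:ℝ)^2 * D j)^2 = (n:ℝ)^3 * (D j)^2 := by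
                field_simp
            _ ≤ (n:ℝ)^3 * ((1/(n:ℝ)) * ((1/(n:ℝ)) * B j)) :=
                mul_le_mul_of_nonneg_left hD2 hn4.le
            _ = (n:ℝ) * B j := by field_simp
      _ = (n:ℝ) * ∑ j ∈ Finset.range n, B j := by rw [Finset.mul_sum]
      _ = (n:ℝ) * ∫ s in Set.Ioc a b, ∫ t, H (s, t) ∂ν := by rw [hsumB]
      _ ≤ (n:ℝ) * ((1/(n:ℝ)) * C) := mul_le_mul_of_nonneg_left hstrip hN.le
      _ = C := by field_simp
  have hF0 : 0 ≤ ∫ y in (0:ℝ)..1, φ y :=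
    intervalIntegral.integral_nonneg zero_le_one (fun y _ => by rw [hφ]; positivity)
  calc (‖∫ y in (0:ℝ)..1, φ y‖₊ : ℝ≥0∞)
      = ENNReal.ofReal (∫ y in (0:ℝ)..1, φ y) := Real.enorm_eq_ofReal hF0
    _ ≤ ENNReal.ofReal C := ENNReal.ofReal_le_ofReal hFC
    _ = M := by rw [hC]; exact ENNReal.ofReal_toReal hMtop
end

section
/- Let M be a Banach algebra and w, w' ∈ M with w' satisfying: every product of the form w^{k(0)} w' w^{k(1)} w' ⋯ w' w^{k(p)} with p occurrences of w' vanishes. Then the spectral radius of w + w' is at most ‖w‖. In particular, lim_n ‖(w+w')^n‖^{1/n} ≤ ‖w‖. -/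
open Filter Topology

namespace Stmt14Aux

variable {M : Type*} [NormedRing M]

/-- `S w w' n q` is the sum of all words of length `n` in the letters `w, w'`
containing exactly `q` occurrences of `w'`. -/
def S (w w' : M) : ℕ → ℕ → M
  | 0, 0 => 1
  | 0, _ + 1 => 0
  | n + 1, 0 => S w w' n 0 * w
  | n + 1, q + 1 => S w w' n (q + 1) * w + S w w' n q * w'

lemma S_eq_zero (w w' : M) : ∀ n q, n < q → S w w' n q = 0
  | 0, _ + 1, _ => rfl
  | n + 1, q + 1, h => by
    show S w w' n (q + 1) * w + S w w' n q * w' = 0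
    rw [S_eq_zero w w' n (q + 1) (by omega), S_eq_zero w w' n q (by omega), zero_mul,
      zero_mul, add_zero]

/-- The set of sums of canonical words with exactly `q` occurrences of `w'`. -/
def C (w w' : M) (q : ℕ) : AddSubmonoid M :=
  AddSubmonoid.closure
    {x | ∃ k : ℕ → ℕ, x = ((List.range q).map fun i => w ^ k i * w').prod * w ^ k q}

lemma mul_w_mem {w w' : M} {q : ℕ} {x : M} (hx : x ∈ C w w' q) : x * w ∈ C w w' q := by
  induction hx using AddSubmonoid.closure_induction with
  | mem x hx =>
    obtain ⟨k, rfl⟩ := hx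
    apply AddSubmonoid.subset_closure
    refine ⟨Function.update k q (k q + 1), ?_⟩
    rw [mul_assoc, ← pow_succ, Function.update_self]
    have hmap : (List.map (fun i => w ^ Function.update k q (k q + 1) i * w') (List.range q))
        = List.map (fun i => w ^ k i * w') (List.range q) := by
      apply List.map_congr_left
      intro i hi
      rw [Function.update_of_ne (Nat.ne_of_lt (List.mem_range.mp hi))]
    rw [hmap]
  | zero => simpa using AddSubmonoid.zero_mem _
  | add a b _ _ ha hb => rw [add_mul]; exact AddSubmonoid.add_mem _ ha hb

lemma mul_w'_mem {w w' : M} {q : ℕ} {x : M} (hx : x ∈ C w w' q) : x * w' ∈ C w w' (q + 1) := by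
  induction hx using AddSubmonoid.closure_induction with
  | mem x hx =>
    obtain ⟨k, rfl⟩ := hx
    apply AddSubmonoid.subset_closure
    refine ⟨Function.update k (q + 1) 0, ?_⟩
    have hmap : (List.map (fun i => w ^ Function.update k (q + 1) 0 i * w') (List.range q))
        = List.map (fun i => w ^ k i * w') (List.range q) := by
      apply List.map_congr_left
      intro i hi
      rw [Function.update_of_ne (by have := List.mem_range.mp hi; omega)]
    rw [Function.update_self, pow_zero, mul_one, List.range_succ, List.map_append,
      List.prod_append, List.map_singleton, List.prod_singleton,
      Function.update_of_ne (Nat.ne_of_lt (Nat.lt_succ_self q)), hmap, mul_assoc]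
  | zero => simpa using AddSubmonoid.zero_mem _
  | add a b _ _ ha hb => rw [add_mul]; exact AddSubmonoid.add_mem _ ha hb

lemma S_mem (w w' : M) : ∀ n q, S w w' n q ∈ C w w' q
  | 0, 0 => by
    apply AddSubmonoid.subset_closure
    exact ⟨fun _ => 0, by simp [S]⟩
  | 0, q + 1 => AddSubmonoid.zero_mem _
  | n + 1, 0 => mul_w_mem (S_mem w w' n 0)
  | n + 1, q + 1 =>
    AddSubmonoid.add_mem _ (mul_w_mem (S_mem w w' n (q + 1))) (mul_w'_mem (S_mem w w' n q))

lemma S_expand (w w' : M) (n : ℕ) :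
    (w + w') ^ n = ∑ q ∈ Finset.range (n + 1), S w w' n q := by
  induction n with
  | zero => simp [S]
  | succ n ih =>
    rw [pow_succ, ih, Finset.sum_mul]
    have h1 : ∀ q, S w w' n q * (w + w') = S w w' n q * w + S w w' n q * w' :=
      fun q => mul_add _ _ _
    simp_rw [h1]
    rw [Finset.sum_add_distrib,
      Finset.sum_range_succ' (fun q => S w w' (n + 1) q) (n + 1)]
    have h2 : ∀ i, S w w' (n + 1) (i + 1) = S w w' n (i + 1) * w + S w w' n i * w' :=
      fun i => rfl
    have h3 : S w w' (n + 1) 0 = S w w' n 0 * w := rfl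
    simp_rw [h2, h3]
    rw [Finset.sum_add_distrib,
      Finset.sum_range_succ (fun i => S w w' n (i + 1) * w) n,
      S_eq_zero w w' n (n + 1) (Nat.lt_succ_self n), zero_mul, add_zero,
      Finset.sum_range_succ' (fun q => S w w' n q * w) n]
    abel

lemma S_norm (w w' : M) : ∀ n q,
    ‖S w w' n q‖ ≤ (n.choose q : ℝ) * ‖w‖ ^ (n - q) * ‖w'‖ ^ q * max 1 ‖(1 : M)‖
  | 0, 0 => by simpa [S] using le_max_right (1 : ℝ) ‖(1 : M)‖
  | 0, q + 1 => by simp [S]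
  | n + 1, 0 => by
    show ‖S w w' n 0 * w‖ ≤ _
    calc ‖S w w' n 0 * w‖ ≤ ‖S w w' n 0‖ * ‖w‖ := norm_mul_le _ _
    _ ≤ ((n.choose 0 : ℝ) * ‖w‖ ^ (n - 0) * ‖w'‖ ^ 0 * max 1 ‖(1 : M)‖) * ‖w‖ := by
        apply mul_le_mul_of_nonneg_right (S_norm w w' n 0) (norm_nonneg w)
    _ = ((n + 1).choose 0 : ℝ) * ‖w‖ ^ (n + 1 - 0) * ‖w'‖ ^ 0 * max 1 ‖(1 : M)‖ := by
        simp [pow_succ]; ring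
  | n + 1, q + 1 => by
    show ‖S w w' n (q + 1) * w + S w w' n q * w'‖ ≤ _
    have hB : (0 : ℝ) ≤ max 1 ‖(1 : M)‖ := le_trans zero_le_one (le_max_left _ _)
    have key2 : ‖S w w' n q * w'‖ ≤
        (n.choose q : ℝ) * ‖w‖ ^ (n - q) * ‖w'‖ ^ (q + 1) * max 1 ‖(1 : M)‖ := by
      calc ‖S w w' n q * w'‖ ≤ ‖S w w' n q‖ * ‖w'‖ := norm_mul_le _ _
      _ ≤ ((n.choose q : ℝ) * ‖w‖ ^ (n - q) * ‖w'‖ ^ q * max 1 ‖(1 : M)‖) * ‖w'‖ :=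
          mul_le_mul_of_nonneg_right (S_norm w w' n q) (norm_nonneg w')
      _ = (n.choose q : ℝ) * ‖w‖ ^ (n - q) * ‖w'‖ ^ (q + 1) * max 1 ‖(1 : M)‖ := by
          rw [pow_succ]; ring
    have key1 : ‖S w w' n (q + 1) * w‖ ≤
        (n.choose (q + 1) : ℝ) * ‖w‖ ^ (n - q) * ‖w'‖ ^ (q + 1) * max 1 ‖(1 : M)‖ := by
      rcases lt_or_ge n (q + 1) with h | h
      · rw [S_eq_zero w w' n (q + 1) h, zero_mul, norm_zero]
        positivity
      · calc ‖S w w' n (q + 1) * w‖ ≤ ‖S w w' n (q + 1)‖ * ‖w‖ := norm_mul_le _ _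
        _ ≤ ((n.choose (q + 1) : ℝ) * ‖w‖ ^ (n - (q + 1)) * ‖w'‖ ^ (q + 1) * max 1 ‖(1 : M)‖)
            * ‖w‖ := mul_le_mul_of_nonneg_right (S_norm w w' n (q + 1)) (norm_nonneg w)
        _ = (n.choose (q + 1) : ℝ) * (‖w‖ ^ (n - (q + 1)) * ‖w‖) * ‖w'‖ ^ (q + 1)
            * max 1 ‖(1 : M)‖ := by ring
        _ = (n.choose (q + 1) : ℝ) * ‖w‖ ^ (n - q) * ‖w'‖ ^ (q + 1) * max 1 ‖(1 : M)‖ := by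
            have hexp : n - (q + 1) + 1 = n - q := by omega
            rw [← pow_succ, hexp]
    calc ‖S w w' n (q + 1) * w + S w w' n q * w'‖
        ≤ ‖S w w' n (q + 1) * w‖ + ‖S w w' n q * w'‖ := norm_add_le _ _
    _ ≤ (n.choose (q + 1) : ℝ) * ‖w‖ ^ (n - q) * ‖w'‖ ^ (q + 1) * max 1 ‖(1 : M)‖
        + (n.choose q : ℝ) * ‖w‖ ^ (n - q) * ‖w'‖ ^ (q + 1) * max 1 ‖(1 : M)‖ :=
      add_le_add key1 key2
    _ = ((n.choose (q + 1) + n.choose q : ℕ) : ℝ) * ‖w‖ ^ (n - q) * ‖w'‖ ^ (q + 1)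
        * max 1 ‖(1 : M)‖ := by push_cast; ring
    _ = ((n + 1).choose (q + 1) : ℝ) * ‖w‖ ^ (n + 1 - (q + 1)) * ‖w'‖ ^ (q + 1)
        * max 1 ‖(1 : M)‖ := by
        rw [Nat.succ_sub_succ, Nat.choose_succ_succ']
        push_cast
        ring

end Stmt14Aux

open Stmt14Aux in
/-- Lemma 7.1, spectral radius bound: if every product containing `p` factors of `w'`
(with powers of `w` interspersed) vanishes, then the spectral radius of `w + w'`
is at most `‖w‖`; in particular `limsup ‖(w+w')ⁿ‖^{1/n} ≤ ‖w‖`. -/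
theorem stmt14 {M : Type*} [NormedRing M] [NormedAlgebra ℂ M] [CompleteSpace M]
    (w w' : M) (p : ℕ)
    (hvanish : ∀ k : ℕ → ℕ,
      ((List.range p).map fun i => w ^ k i * w').prod * w ^ k p = 0) :
    spectralRadius ℂ (w + w') ≤ (‖w‖₊ : ENNReal) ∧
    Filter.limsup (fun n : ℕ => ‖(w + w') ^ n‖ ^ ((1:ℝ) / n)) atTop ≤ ‖w‖ := by
  set a := w + w' with ha
  set r := ‖w‖ with hr
  set B := max 1 ‖(1 : M)‖ with hBdef
  have hB0 : (0 : ℝ) < B := lt_of_lt_of_le zero_lt_one (le_max_left _ _)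
  -- every canonical word with at least p occurrences of w' vanishes
  have hgen : ∀ q, p ≤ q → ∀ k : ℕ → ℕ,
      ((List.range q).map fun i => w ^ k i * w').prod * w ^ k q = 0 := by
    intro q hq k
    have hp : ((List.range p).map fun i => w ^ k i * w').prod = 0 := by
      have h := hvanish (Function.update k p 0)
      rw [Function.update_self, pow_zero, mul_one] at h
      rw [← h]
      congr 1
      apply List.map_congr_left
      intro i hi
      rw [Function.update_of_ne (Nat.ne_of_lt (List.mem_range.mp hi))]
    obtain ⟨m, rfl⟩ := Nat.exists_eq_add_of_le hq
    rw [List.range_add, List.map_append, List.prod_append, hp, zero_mul, zero_mul]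
  -- hence S vanishes for q ≥ p
  have hSvan : ∀ n q, p ≤ q → S w w' n q = 0 := by
    intro n q hq
    have hall : ∀ x ∈ C w w' q, x = (0 : M) := by
      intro x hx
      induction hx using AddSubmonoid.closure_induction with
      | mem y hy => obtain ⟨k, rfl⟩ := hy; exact hgen q hq k
      | zero => rfl
      | add a b _ _ ha hb => rw [ha, hb, add_zero]
    exact hall _ (S_mem w w' n q)
  -- the combinatorial norm bound
  have hbound : ∀ n, p ≤ n → ‖a ^ n‖ ≤
      ∑ q ∈ Finset.range p, (n.choose q : ℝ) * r ^ (n - q) * ‖w'‖ ^ q * B := by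
    intro n hn
    calc ‖a ^ n‖ = ‖∑ q ∈ Finset.range (n + 1), S w w' n q‖ := by rw [ha, S_expand]
    _ ≤ ∑ q ∈ Finset.range (n + 1), ‖S w w' n q‖ := norm_sum_le _ _
    _ = ∑ q ∈ Finset.range p, ‖S w w' n q‖ := by
        symm
        apply Finset.sum_subset
        · intro x hx
          simp only [Finset.mem_range] at *
          omega
        · intro x _ hx
          simp only [Finset.mem_range, not_lt] at hx
          rw [hSvan n x hx, norm_zero]
    _ ≤ ∑ q ∈ Finset.range p, (n.choose q : ℝ) * r ^ (n - q) * ‖w'‖ ^ q * B :=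
      Finset.sum_le_sum fun q _ => S_norm w w' n q
  -- the key eventual bound
  have hev : ∀ ε : ℝ, 0 < ε →
      ∀ᶠ n : ℕ in atTop, ‖a ^ n‖ ^ ((1:ℝ) / n) ≤ r + ε := by
    intro ε hε
    rcases eq_or_lt_of_le (norm_nonneg w) with h0 | hrpos
    · -- r = 0 case
      filter_upwards [eventually_ge_atTop (max p 1)] with n hn
      have hn1 : 1 ≤ n := le_trans (le_max_right _ _) hn
      have hnp : p ≤ n := le_trans (le_max_left _ _) hn
      have : ‖a ^ n‖ ≤ 0 := by
        refine le_trans (hbound n hnp) (le_of_eq (Finset.sum_eq_zero fun q hq => ?_))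
        have hq : q < p := Finset.mem_range.mp hq
        have hr0 : r = 0 := h0.symm
        rw [hr0, zero_pow (by omega : n - q ≠ 0)]
        ring
      have h0' : ‖a ^ n‖ = 0 := le_antisymm this (norm_nonneg _)
      rw [h0', Real.zero_rpow (by positivity : (1:ℝ) / n ≠ 0)]
      have hr0 : r = 0 := h0.symm
      rw [hr0]
      linarith
    · -- r > 0 case
      set K := max 1 (‖w'‖ / r) with hKdef
      have hK1 : (1 : ℝ) ≤ K := le_max_left _ _
      obtain ⟨D, hDdef, hD0⟩ : ∃ D : ℝ, D = (p + 1 : ℝ) * K ^ p * B ∧ 0 < D :=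
        ⟨_, rfl, by positivity⟩
      -- D * n^p * r^n bound
      have hbd2 : ∀ n, max p 1 ≤ n → ‖a ^ n‖ ≤ D * (n : ℝ) ^ p * r ^ n := by
        intro n hn
        have hn1 : 1 ≤ n := le_trans (le_max_right _ _) hn
        have hnp : p ≤ n := le_trans (le_max_left _ _) hn
        refine le_trans (hbound n hnp) ?_
        have hterm : ∀ q ∈ Finset.range p,
            (n.choose q : ℝ) * r ^ (n - q) * ‖w'‖ ^ q * B ≤ (n : ℝ) ^ p * K ^ p * B * r ^ n := by
          intro q hq
          have hqp : q < p := Finset.mem_range.mp hq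
          have hc : (n.choose q : ℝ) ≤ (n : ℝ) ^ p := by
            have h1 : (n.choose q : ℝ) ≤ ((n ^ q : ℕ) : ℝ) := by
              exact_mod_cast Nat.choose_le_pow n q
            have h2 : ((n ^ q : ℕ) : ℝ) = (n : ℝ) ^ q := by push_cast; ring
            have h3 : (n : ℝ) ^ q ≤ (n : ℝ) ^ p :=
              pow_le_pow_right₀ (by exact_mod_cast hn1) (le_of_lt hqp)
            linarith
          have hw' : ‖w'‖ ^ q = r ^ q * (‖w'‖ / r) ^ q := by
            rw [← mul_pow]
            congr 1
            have hr0 : r ≠ 0 := ne_of_gt hrpos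
            field_simp
          have hrq : r ^ (n - q) * r ^ q = r ^ n := by
            rw [← pow_add]
            congr 1
            omega
          have hKq : (‖w'‖ / r) ^ q ≤ K ^ p := by
            calc (‖w'‖ / r) ^ q ≤ K ^ q :=
              pow_le_pow_left₀ (by positivity) (le_max_right _ _) q
            _ ≤ K ^ p := pow_le_pow_right₀ hK1 (le_of_lt hqp)
          calc (n.choose q : ℝ) * r ^ (n - q) * ‖w'‖ ^ q * B
              = (n.choose q : ℝ) * ((‖w'‖ / r) ^ q) * (r ^ (n - q) * r ^ q) * B := by
                rw [hw']; ring
          _ = (n.choose q : ℝ) * ((‖w'‖ / r) ^ q) * r ^ n * B := by rw [hrq]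
          _ ≤ (n : ℝ) ^ p * K ^ p * r ^ n * B := by
              apply mul_le_mul_of_nonneg_right _ (le_of_lt hB0)
              apply mul_le_mul_of_nonneg_right _ (by positivity)
              exact mul_le_mul hc hKq (by positivity) (by positivity)
          _ = (n : ℝ) ^ p * K ^ p * B * r ^ n := by ring
        calc ∑ q ∈ Finset.range p, (n.choose q : ℝ) * r ^ (n - q) * ‖w'‖ ^ q * B
            ≤ ∑ _q ∈ Finset.range p, (n : ℝ) ^ p * K ^ p * B * r ^ n :=
          Finset.sum_le_sum hterm
        _ = (p : ℝ) * ((n : ℝ) ^ p * K ^ p * B * r ^ n) := by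
            rw [Finset.sum_const, Finset.card_range, nsmul_eq_mul]
        _ ≤ ((p : ℝ) + 1) * ((n : ℝ) ^ p * K ^ p * B * r ^ n) := by
            apply mul_le_mul_of_nonneg_right (by linarith) (by positivity)
        _ = D * (n : ℝ) ^ p * r ^ n := by rw [hDdef]; ring
      -- the tendsto of the bound's n-th root
      have htend : Tendsto (fun n : ℕ => (D * (n : ℝ) ^ p * r ^ n) ^ ((1:ℝ) / n)) atTop
          (𝓝 r) := by
        have heq : ∀ᶠ n : ℕ in atTop,
            D ^ ((1:ℝ) / n) * ((n : ℝ) ^ ((1:ℝ) / n)) ^ p * r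
              = (D * (n : ℝ) ^ p * r ^ n) ^ ((1:ℝ) / n) := by
          filter_upwards [eventually_ge_atTop 1] with n hn1
          have hn0 : (n : ℝ) ≠ 0 := by positivity
          rw [Real.mul_rpow (by positivity) (by positivity),
            Real.mul_rpow (le_of_lt hD0) (by positivity)]
          rw [one_div, Real.pow_rpow_inv_natCast (le_of_lt hrpos) (by omega),
            ← Real.rpow_natCast (n : ℝ) p, ← Real.rpow_mul (by positivity),
            mul_comm (p : ℝ) ((n:ℝ)⁻¹), Real.rpow_mul (by positivity),
            Real.rpow_natCast]
        apply Tendsto.congr' heq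
        have h1 : Tendsto (fun n : ℕ => D ^ ((1:ℝ) / n)) atTop (𝓝 1) := by
          have := (Filter.Tendsto.rpow (tendsto_const_nhds : Tendsto (fun _ : ℕ => D) atTop (𝓝 D))
            tendsto_one_div_atTop_nhds_zero_nat (Or.inl (ne_of_gt hD0)))
          simpa using this
        have h2 : Tendsto (fun n : ℕ => ((n : ℝ) ^ ((1:ℝ) / n)) ^ p) atTop (𝓝 1) := by
          have hbase : Tendsto (fun n : ℕ => (n : ℝ) ^ ((1:ℝ) / (n : ℝ))) atTop (𝓝 1) :=
            tendsto_rpow_div.comp tendsto_natCast_atTop_atTop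
          simpa using hbase.pow p
        have := (h1.mul h2).mul_const r
        simpa using this
      have hlt : ∀ᶠ n : ℕ in atTop, (D * (n : ℝ) ^ p * r ^ n) ^ ((1:ℝ) / n) < r + ε :=
        htend.eventually_lt_const (show r < r + ε by linarith)
      filter_upwards [hlt, eventually_ge_atTop (max p 1)] with n hn hge
      refine le_trans ?_ (le_of_lt hn)
      apply Real.rpow_le_rpow (norm_nonneg _) (hbd2 n hge) (by positivity)
  constructor
  · -- spectral radius part
    refine le_trans (spectrum.spectralRadius_le_liminf_pow_nnnorm_pow_one_div ℂ a) ?_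
    refine ENNReal.le_of_forall_pos_le_add fun ε hε _ => ?_
    have hev' := hev ε (by exact_mod_cast hε)
    refine liminf_le_of_frequently_le ?_ (by isBoundedDefault)
    apply Eventually.frequently
    filter_upwards [hev', eventually_ge_atTop 1] with n hn hn1
    have hcoe : ((‖a ^ n‖₊ : ENNReal) ^ ((1 : ℝ) / n)) ≤ ((‖w‖₊ + ε : NNReal) : ENNReal) := by
      rw [← ENNReal.coe_rpow_of_nonneg _ (by positivity : (0:ℝ) ≤ (1:ℝ) / n),
        ENNReal.coe_le_coe, ← NNReal.coe_le_coe, NNReal.coe_rpow, coe_nnnorm,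
        NNReal.coe_add, coe_nnnorm]
      exact hn
    simpa [ENNReal.coe_add] using hcoe
  · -- limsup part
    have hcb : IsCoboundedUnder (· ≤ ·) atTop fun n : ℕ => ‖a ^ n‖ ^ ((1:ℝ) / n) := by
      apply isCoboundedUnder_le_of_le (x := 0) atTop
      intro n
      positivity
    have hub : ∀ ε : ℝ, 0 < ε →
        limsup (fun n : ℕ => ‖a ^ n‖ ^ ((1:ℝ) / n)) atTop ≤ r + ε := by
      intro ε hε
      exact limsup_le_of_le hcb (hev ε hε)
    exact le_of_forall_pos_le_add hub
end

section
/- Define G(b, c) as a pair of formal power series solutions to the system G₁ = b(1 − b·α(G₂))⁻¹ and G₂ = c(1 − c·β(G₁))⁻¹ where α, β are bounded linear maps on a unital Banach algebra B and b, c ∈ B with ‖b‖‖c‖ sufficiently small. Then the system has a unique solution with G₁ = b + O(‖b‖²‖c‖), obtained by iteration, and G₁ satisfies G₁ = b(1 − b·α(c(1 − c·β(G₁))⁻¹))⁻¹. -/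
set_option maxHeartbeats 1000000

section Aux
variable {B : Type*} [NormedRing B] [NormOneClass B] [CompleteSpace B]

lemma aux_isUnit {x : B} (hx : ‖x‖ ≤ 1/2) : IsUnit (1 - x) :=
  isUnit_one_sub_of_norm_lt_one (lt_of_le_of_lt hx (by norm_num))

lemma aux_inv_norm {x : B} (hx : ‖x‖ ≤ 1/2) : ‖Ring.inverse (1 - x)‖ ≤ 2 := by
  have hu := aux_isUnit hx
  have h1 : Ring.inverse (1 - x) * (1 - x) = 1 := Ring.inverse_mul_cancel _ hu
  have h2 : Ring.inverse (1 - x) = 1 + Ring.inverse (1 - x) * x := by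
    rw [mul_sub, mul_one] at h1
    exact eq_add_of_sub_eq h1
  have h3 : ‖Ring.inverse (1 - x)‖ ≤ 1 + ‖Ring.inverse (1 - x)‖ * ‖x‖ := by
    calc ‖Ring.inverse (1 - x)‖ = ‖1 + Ring.inverse (1 - x) * x‖ := by rw [← h2]
    _ ≤ ‖(1:B)‖ + ‖Ring.inverse (1 - x) * x‖ := norm_add_le _ _
    _ ≤ 1 + ‖Ring.inverse (1 - x)‖ * ‖x‖ := by
        rw [norm_one]; exact add_le_add le_rfl (norm_mul_le _ _)
  nlinarith [norm_nonneg (Ring.inverse (1 - x)), norm_nonneg x]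

lemma aux_inv_sub_one {x : B} (hx : ‖x‖ ≤ 1/2) :
    ‖Ring.inverse (1 - x) - 1‖ ≤ 2 * ‖x‖ := by
  have hu := aux_isUnit hx
  have h1 : Ring.inverse (1 - x) * (1 - x) = 1 := Ring.inverse_mul_cancel _ hu
  have h2 : Ring.inverse (1 - x) - 1 = Ring.inverse (1 - x) * x := by
    rw [mul_sub, mul_one] at h1
    exact sub_eq_of_eq_add' (eq_add_of_sub_eq h1)
  rw [h2]
  calc ‖Ring.inverse (1 - x) * x‖ ≤ ‖Ring.inverse (1 - x)‖ * ‖x‖ := norm_mul_le _ _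
  _ ≤ 2 * ‖x‖ := mul_le_mul_of_nonneg_right (aux_inv_norm hx) (norm_nonneg x)

lemma aux_inv_sub_inv {x y : B} (hx : ‖x‖ ≤ 1/2) (hy : ‖y‖ ≤ 1/2) :
    ‖Ring.inverse (1 - x) - Ring.inverse (1 - y)‖ ≤ 4 * ‖x - y‖ := by
  have hux := aux_isUnit hx
  have huy := aux_isUnit hy
  have h1 : Ring.inverse (1 - x) * (1 - x) = 1 := Ring.inverse_mul_cancel _ hux
  have h2 : (1 - y) * Ring.inverse (1 - y) = 1 := Ring.mul_inverse_cancel _ huy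
  have key : Ring.inverse (1 - x) - Ring.inverse (1 - y)
      = Ring.inverse (1 - x) * (x - y) * Ring.inverse (1 - y) := by
    have e1 : Ring.inverse (1 - x) * ((1 - y) * Ring.inverse (1 - y))
        = Ring.inverse (1 - x) := by rw [h2, mul_one]
    have e2 : (Ring.inverse (1 - x) * (1 - x)) * Ring.inverse (1 - y)
        = Ring.inverse (1 - y) := by rw [h1, one_mul]
    calc Ring.inverse (1 - x) - Ring.inverse (1 - y)
        = Ring.inverse (1 - x) * ((1 - y) * Ring.inverse (1 - y))
          - (Ring.inverse (1 - x) * (1 - x)) * Ring.inverse (1 - y) := by rw [e1, e2]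
    _ = Ring.inverse (1 - x) * (x - y) * Ring.inverse (1 - y) := by noncomm_ring
  rw [key]
  calc ‖Ring.inverse (1 - x) * (x - y) * Ring.inverse (1 - y)‖
      ≤ ‖Ring.inverse (1 - x) * (x - y)‖ * ‖Ring.inverse (1 - y)‖ := norm_mul_le _ _
  _ ≤ (‖Ring.inverse (1 - x)‖ * ‖x - y‖) * ‖Ring.inverse (1 - y)‖ :=
      mul_le_mul_of_nonneg_right (norm_mul_le _ _) (norm_nonneg _)
  _ ≤ (2 * ‖x - y‖) * 2 := by
      have h4 : ‖Ring.inverse (1 - x)‖ * ‖x - y‖ ≤ 2 * ‖x - y‖ :=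
        mul_le_mul_of_nonneg_right (aux_inv_norm hx) (norm_nonneg _)
      exact mul_le_mul h4 (aux_inv_norm hy) (norm_nonneg _) (by positivity)
  _ = 4 * ‖x - y‖ := by ring

lemma aux_close (a : B) {x : B} (hx : ‖x‖ ≤ 1/2) :
    ‖a * Ring.inverse (1 - x) - a‖ ≤ 2 * ‖a‖ * ‖x‖ := by
  have h : a * Ring.inverse (1 - x) - a = a * (Ring.inverse (1 - x) - 1) := by
    rw [mul_sub, mul_one]
  rw [h]
  calc ‖a * (Ring.inverse (1 - x) - 1)‖ ≤ ‖a‖ * ‖Ring.inverse (1 - x) - 1‖ :=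
      norm_mul_le _ _
  _ ≤ ‖a‖ * (2 * ‖x‖) := mul_le_mul_of_nonneg_left (aux_inv_sub_one hx) (norm_nonneg a)
  _ = 2 * ‖a‖ * ‖x‖ := by ring

lemma aux_step (a : B) {x y : B} (hx : ‖x‖ ≤ 1/2) (hy : ‖y‖ ≤ 1/2) :
    ‖a * Ring.inverse (1 - x) - a * Ring.inverse (1 - y)‖ ≤ 4 * ‖a‖ * ‖x - y‖ := by
  rw [← mul_sub]
  calc ‖a * (Ring.inverse (1 - x) - Ring.inverse (1 - y))‖
      ≤ ‖a‖ * ‖Ring.inverse (1 - x) - Ring.inverse (1 - y)‖ := norm_mul_le _ _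
  _ ≤ ‖a‖ * (4 * ‖x - y‖) :=
      mul_le_mul_of_nonneg_left (aux_inv_sub_inv hx hy) (norm_nonneg a)
  _ = 4 * ‖a‖ * ‖x - y‖ := by ring

end Aux

/-- The fixed-point system for the `B`-valued Cauchy transforms (Proposition 4.8):
for `‖b‖‖c‖` sufficiently small the system `G₁ = b(1 − b·α(G₂))⁻¹`,
`G₂ = c(1 − c·β(G₁))⁻¹` has a unique solution with `G₁ = b + O(‖b‖²‖c‖)` (and
`G₂ = c + O(‖c‖²‖b‖)`), obtained by iteration, and `G₁` then satisfies
`G₁ = b(1 − b·α(c(1 − c·β(G₁))⁻¹))⁻¹`. -/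
theorem stmt17 {B : Type*} [NormedRing B] [NormOneClass B] [CompleteSpace B]
    [NormedAlgebra ℂ B]
    (α β : B →L[ℂ] B) :
    ∃ δ > (0:ℝ), ∃ C > (0:ℝ), ∀ b c : B, ‖b‖ * ‖c‖ < δ →
      (∃! G : B × B,
        (‖G.1 - b‖ ≤ C * ‖b‖ ^ 2 * ‖c‖ ∧ ‖G.2 - c‖ ≤ C * ‖c‖ ^ 2 * ‖b‖) ∧
        G.1 = b * Ring.inverse (1 - b * α G.2) ∧
        G.2 = c * Ring.inverse (1 - c * β G.1)) ∧
      (∀ G : B × B,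
        ((‖G.1 - b‖ ≤ C * ‖b‖ ^ 2 * ‖c‖ ∧ ‖G.2 - c‖ ≤ C * ‖c‖ ^ 2 * ‖b‖) ∧
          G.1 = b * Ring.inverse (1 - b * α G.2) ∧
          G.2 = c * Ring.inverse (1 - c * β G.1)) →
        G.1 = b * Ring.inverse (1 - b * α (c * Ring.inverse (1 - c * β G.1)))) := by
  classical
  set M : ℝ := max (max ‖α‖ ‖β‖) 1 with hMdef
  have hM1 : (1:ℝ) ≤ M := le_max_right _ _
  have hM0 : (0:ℝ) < M := lt_of_lt_of_le one_pos hM1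
  have hMα : ‖α‖ ≤ M := le_trans (le_max_left _ _) (le_max_left _ _)
  have hMβ : ‖β‖ ≤ M := le_trans (le_max_right _ _) (le_max_left _ _)
  refine ⟨1/(16*M^2), by positivity, 4*M, by positivity, fun b c hbc => ?_⟩
  have hb0 : (0:ℝ) ≤ ‖b‖ := norm_nonneg b
  have hc0 : (0:ℝ) ≤ ‖c‖ := norm_nonneg c
  have h16 : ‖b‖ * ‖c‖ * (16*M^2) < 1 := by
    have := (lt_div_iff₀ (by positivity : (0:ℝ) < 16*M^2)).1 hbc
    linarith [(mul_lt_mul_of_pos_right this (by positivity : (0:ℝ) < 16*M^2))]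
  -- the basic smallness estimate
  have hhalf : 2*M*‖b‖*‖c‖ ≤ 1/8 := by
    nlinarith [mul_nonneg (mul_nonneg hb0 hc0) hM0.le,
      mul_nonneg (mul_nonneg (mul_nonneg hb0 hc0) hM0.le) (by linarith : (0:ℝ) ≤ M - 1)]
  -- product bounds
  have hαbd : ∀ u : B, ‖u‖ ≤ 2*‖c‖ → ‖b * α u‖ ≤ 2*M*‖b‖*‖c‖ := by
    intro u hu
    calc ‖b * α u‖ ≤ ‖b‖ * ‖α u‖ := norm_mul_le _ _
    _ ≤ ‖b‖ * (‖α‖ * ‖u‖) := mul_le_mul_of_nonneg_left (α.le_opNorm u) hb0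
    _ ≤ ‖b‖ * (M * (2*‖c‖)) := by
        exact mul_le_mul_of_nonneg_left
          (mul_le_mul hMα hu (norm_nonneg u) hM0.le) hb0
    _ = 2*M*‖b‖*‖c‖ := by ring
  have hβbd : ∀ g : B, ‖g‖ ≤ 2*‖b‖ → ‖c * β g‖ ≤ 2*M*‖b‖*‖c‖ := by
    intro g hg
    calc ‖c * β g‖ ≤ ‖c‖ * ‖β g‖ := norm_mul_le _ _
    _ ≤ ‖c‖ * (‖β‖ * ‖g‖) := mul_le_mul_of_nonneg_left (β.le_opNorm g) hc0
    _ ≤ ‖c‖ * (M * (2*‖b‖)) := by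
        exact mul_le_mul_of_nonneg_left
          (mul_le_mul hMβ hg (norm_nonneg g) hM0.le) hc0
    _ = 2*M*‖b‖*‖c‖ := by ring
  have hαhalf : ∀ u : B, ‖u‖ ≤ 2*‖c‖ → ‖b * α u‖ ≤ 1/2 := fun u hu =>
    le_trans (hαbd u hu) (by linarith)
  have hβhalf : ∀ g : B, ‖g‖ ≤ 2*‖b‖ → ‖c * β g‖ ≤ 1/2 := fun g hg =>
    le_trans (hβbd g hg) (by linarith)
  -- membership in the balls gives the crude norm bounds
  have hball : ∀ x : B, ‖x - b‖ ≤ 4*M*‖b‖^2*‖c‖ → ‖x‖ ≤ 2*‖b‖ := by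
    intro x hx
    have h1 : ‖x‖ - ‖b‖ ≤ ‖x - b‖ := norm_sub_norm_le _ _
    nlinarith [mul_le_mul_of_nonneg_right hhalf hb0]
  have hcball : ∀ u : B, ‖u - c‖ ≤ 4*M*‖c‖^2*‖b‖ → ‖u‖ ≤ 2*‖c‖ := by
    intro u hu
    have h1 : ‖u‖ - ‖c‖ ≤ ‖u - c‖ := norm_sub_norm_le _ _
    nlinarith [mul_le_mul_of_nonneg_right hhalf hc0]
  -- the second-component map
  set H : B → B := fun g => c * Ring.inverse (1 - c * β g) with hHdef
  have hHnorm : ∀ g : B, ‖g‖ ≤ 2*‖b‖ → ‖H g‖ ≤ 2*‖c‖ := by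
    intro g hg
    calc ‖H g‖ ≤ ‖c‖ * ‖Ring.inverse (1 - c * β g)‖ := norm_mul_le _ _
    _ ≤ ‖c‖ * 2 := mul_le_mul_of_nonneg_left (aux_inv_norm (hβhalf g hg)) hc0
    _ = 2*‖c‖ := by ring
  have hHc : ∀ g : B, ‖g‖ ≤ 2*‖b‖ → ‖H g - c‖ ≤ 4*M*‖c‖^2*‖b‖ := by
    intro g hg
    calc ‖H g - c‖ ≤ 2 * ‖c‖ * ‖c * β g‖ := aux_close c (hβhalf g hg)
    _ ≤ 2 * ‖c‖ * (2*M*‖b‖*‖c‖) :=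
        mul_le_mul_of_nonneg_left (hβbd g hg) (by positivity)
    _ = 4*M*‖c‖^2*‖b‖ := by ring
  have hHlip : ∀ g g' : B, ‖g‖ ≤ 2*‖b‖ → ‖g'‖ ≤ 2*‖b‖ →
      ‖H g - H g'‖ ≤ 4*M*‖c‖^2 * ‖g - g'‖ := by
    intro g g' hg hg'
    have hsub : c * β g - c * β g' = c * β (g - g') := by
      rw [map_sub, mul_sub]
    calc ‖H g - H g'‖ ≤ 4 * ‖c‖ * ‖c * β g - c * β g'‖ :=
        aux_step c (hβhalf g hg) (hβhalf g' hg')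
    _ = 4 * ‖c‖ * ‖c * β (g - g')‖ := by rw [hsub]
    _ ≤ 4 * ‖c‖ * (‖c‖ * (‖β‖ * ‖g - g'‖)) := by
        refine mul_le_mul_of_nonneg_left ?_ (by positivity)
        calc ‖c * β (g - g')‖ ≤ ‖c‖ * ‖β (g - g')‖ := norm_mul_le _ _
        _ ≤ ‖c‖ * (‖β‖ * ‖g - g'‖) :=
            mul_le_mul_of_nonneg_left (β.le_opNorm _) hc0
    _ ≤ 4 * ‖c‖ * (‖c‖ * (M * ‖g - g'‖)) := by
        refine mul_le_mul_of_nonneg_left (mul_le_mul_of_nonneg_left ?_ hc0) (by positivity)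
        exact mul_le_mul_of_nonneg_right hMβ (norm_nonneg _)
    _ = 4*M*‖c‖^2 * ‖g - g'‖ := by ring
  -- the first-component map
  set Φ : B → B := fun g => b * Ring.inverse (1 - b * α (H g)) with hΦdef
  have hΦb : ∀ g : B, ‖g‖ ≤ 2*‖b‖ → ‖Φ g - b‖ ≤ 4*M*‖b‖^2*‖c‖ := by
    intro g hg
    calc ‖Φ g - b‖ ≤ 2 * ‖b‖ * ‖b * α (H g)‖ :=
        aux_close b (hαhalf _ (hHnorm g hg))
    _ ≤ 2 * ‖b‖ * (2*M*‖b‖*‖c‖) :=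
        mul_le_mul_of_nonneg_left (hαbd _ (hHnorm g hg)) (by positivity)
    _ = 4*M*‖b‖^2*‖c‖ := by ring
  have hΦlip1 : ∀ u v : B, ‖u‖ ≤ 2*‖c‖ → ‖v‖ ≤ 2*‖c‖ →
      ‖b * Ring.inverse (1 - b * α u) - b * Ring.inverse (1 - b * α v)‖
        ≤ 4*M*‖b‖^2 * ‖u - v‖ := by
    intro u v hu hv
    have hsub : b * α u - b * α v = b * α (u - v) := by rw [map_sub, mul_sub]
    calc ‖b * Ring.inverse (1 - b * α u) - b * Ring.inverse (1 - b * α v)‖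
        ≤ 4 * ‖b‖ * ‖b * α u - b * α v‖ := aux_step b (hαhalf u hu) (hαhalf v hv)
    _ = 4 * ‖b‖ * ‖b * α (u - v)‖ := by rw [hsub]
    _ ≤ 4 * ‖b‖ * (‖b‖ * (‖α‖ * ‖u - v‖)) := by
        refine mul_le_mul_of_nonneg_left ?_ (by positivity)
        calc ‖b * α (u - v)‖ ≤ ‖b‖ * ‖α (u - v)‖ := norm_mul_le _ _
        _ ≤ ‖b‖ * (‖α‖ * ‖u - v‖) :=
            mul_le_mul_of_nonneg_left (α.le_opNorm _) hb0
    _ ≤ 4 * ‖b‖ * (‖b‖ * (M * ‖u - v‖)) := by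
        refine mul_le_mul_of_nonneg_left (mul_le_mul_of_nonneg_left ?_ hb0) (by positivity)
        exact mul_le_mul_of_nonneg_right hMα (norm_nonneg _)
    _ = 4*M*‖b‖^2 * ‖u - v‖ := by ring
  have hΦlip : ∀ g g' : B, ‖g‖ ≤ 2*‖b‖ → ‖g'‖ ≤ 2*‖b‖ →
      ‖Φ g - Φ g'‖ ≤ (1/2) * ‖g - g'‖ := by
    intro g g' hg hg'
    calc ‖Φ g - Φ g'‖ ≤ 4*M*‖b‖^2 * ‖H g - H g'‖ :=
        hΦlip1 _ _ (hHnorm g hg) (hHnorm g' hg')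
    _ ≤ 4*M*‖b‖^2 * (4*M*‖c‖^2 * ‖g - g'‖) :=
        mul_le_mul_of_nonneg_left (hHlip g g' hg hg') (by positivity)
    _ ≤ (1/2) * ‖g - g'‖ := by
        have h := mul_le_mul hhalf hhalf (by positivity) (by norm_num)
        nlinarith [norm_nonneg (g - g')]
  -- set up the contraction on the closed ball
  set ρ : ℝ := 4*M*‖b‖^2*‖c‖ with hρdef
  have hρ0 : (0:ℝ) ≤ ρ := by positivity
  set S : Set B := Metric.closedBall b ρ with hSdef
  have hmem : ∀ x : B, x ∈ S ↔ ‖x - b‖ ≤ ρ := by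
    intro x; rw [hSdef, Metric.mem_closedBall, dist_eq_norm]
  haveI : CompleteSpace S := (Metric.isClosed_closedBall).completeSpace_coe
  haveI : Nonempty S := ⟨⟨b, (hmem b).2 (by simp [hρ0])⟩⟩
  have hmem2 : ∀ x : S, ‖(x:B)‖ ≤ 2*‖b‖ := fun x => hball _ ((hmem _).1 x.2)
  set f : S → S := fun g => ⟨Φ g, (hmem _).2 (hΦb _ (hmem2 g))⟩ with hfdef
  have hCW : ContractingWith (1/2 : NNReal) f := by
    constructor
    · rw [← NNReal.coe_lt_coe]; norm_num
    · apply LipschitzWith.of_dist_le_mul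
      intro g g'
      simp only [Subtype.dist_eq, dist_eq_norm]
      have h := hΦlip g g' (hmem2 g) (hmem2 g')
      have hc : ((1/2 : NNReal) : ℝ) = 1/2 := by norm_num
      rw [hc]
      exact h
  set g₀ : S := ContractingWith.fixedPoint f hCW with hg₀def
  have hfix : Φ (g₀ : B) = (g₀ : B) :=
    congrArg Subtype.val (ContractingWith.fixedPoint_isFixedPt hCW)
  have hg₀norm : ‖(g₀:B)‖ ≤ 2*‖b‖ := hmem2 g₀
  -- the solution
  set G : B × B := ((g₀:B), H (g₀:B)) with hGdef
  have hGprop : (‖G.1 - b‖ ≤ (4*M) * ‖b‖ ^ 2 * ‖c‖ ∧ ‖G.2 - c‖ ≤ (4*M) * ‖c‖ ^ 2 * ‖b‖) ∧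
      G.1 = b * Ring.inverse (1 - b * α G.2) ∧
      G.2 = c * Ring.inverse (1 - c * β G.1) := by
    refine ⟨⟨?_, ?_⟩, ?_, ?_⟩
    · have := (hmem _).1 g₀.2
      calc ‖G.1 - b‖ = ‖(g₀:B) - b‖ := rfl
      _ ≤ ρ := this
      _ = (4*M) * ‖b‖ ^ 2 * ‖c‖ := hρdef
    · have := hHc _ hg₀norm
      calc ‖G.2 - c‖ = ‖H (g₀:B) - c‖ := rfl
      _ ≤ 4*M*‖c‖^2*‖b‖ := this
      _ = (4*M) * ‖c‖ ^ 2 * ‖b‖ := by ring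
    · exact hfix.symm
    · rfl
  -- uniqueness argument, stated for arbitrary pairs of solutions
  have huniq : ∀ G' G'' : B × B,
      ((‖G'.1 - b‖ ≤ (4*M) * ‖b‖ ^ 2 * ‖c‖ ∧ ‖G'.2 - c‖ ≤ (4*M) * ‖c‖ ^ 2 * ‖b‖) ∧
        G'.1 = b * Ring.inverse (1 - b * α G'.2) ∧
        G'.2 = c * Ring.inverse (1 - c * β G'.1)) →
      ((‖G''.1 - b‖ ≤ (4*M) * ‖b‖ ^ 2 * ‖c‖ ∧ ‖G''.2 - c‖ ≤ (4*M) * ‖c‖ ^ 2 * ‖b‖) ∧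
        G''.1 = b * Ring.inverse (1 - b * α G''.2) ∧
        G''.2 = c * Ring.inverse (1 - c * β G''.1)) →
      G' = G'' := by
    rintro G' G'' ⟨⟨h1', h2'⟩, h3', h4'⟩ ⟨⟨h1'', h2''⟩, h3'', h4''⟩
    have hn1' : ‖G'.1‖ ≤ 2*‖b‖ := hball _ (by calc ‖G'.1 - b‖ ≤ (4*M) * ‖b‖ ^ 2 * ‖c‖ := h1'
      _ = 4*M*‖b‖^2*‖c‖ := by ring)
    have hn1'' : ‖G''.1‖ ≤ 2*‖b‖ := hball _ (by calc ‖G''.1 - b‖ ≤ (4*M) * ‖b‖ ^ 2 * ‖c‖ := h1''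
      _ = 4*M*‖b‖^2*‖c‖ := by ring)
    have hn2' : ‖G'.2‖ ≤ 2*‖c‖ := hcball _ (by calc ‖G'.2 - c‖ ≤ (4*M) * ‖c‖ ^ 2 * ‖b‖ := h2'
      _ = 4*M*‖c‖^2*‖b‖ := by ring)
    have hn2'' : ‖G''.2‖ ≤ 2*‖c‖ := hcball _ (by calc ‖G''.2 - c‖ ≤ (4*M) * ‖c‖ ^ 2 * ‖b‖ := h2''
      _ = 4*M*‖c‖^2*‖b‖ := by ring)
    have hd1 : ‖G'.1 - G''.1‖ ≤ 4*M*‖b‖^2 * ‖G'.2 - G''.2‖ := by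
      rw [h3', h3'']
      exact hΦlip1 _ _ hn2' hn2''
    have hd2 : ‖G'.2 - G''.2‖ ≤ 4*M*‖c‖^2 * ‖G'.1 - G''.1‖ := by
      rw [h4', h4'']
      have hsub : c * β G'.1 - c * β G''.1 = c * β (G'.1 - G''.1) := by
        rw [map_sub, mul_sub]
      calc ‖c * Ring.inverse (1 - c * β G'.1) - c * Ring.inverse (1 - c * β G''.1)‖
          ≤ 4 * ‖c‖ * ‖c * β G'.1 - c * β G''.1‖ :=
            aux_step c (hβhalf _ hn1') (hβhalf _ hn1'')
      _ = 4 * ‖c‖ * ‖c * β (G'.1 - G''.1)‖ := by rw [hsub]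
      _ ≤ 4 * ‖c‖ * (‖c‖ * (‖β‖ * ‖G'.1 - G''.1‖)) := by
          refine mul_le_mul_of_nonneg_left ?_ (by positivity)
          calc ‖c * β (G'.1 - G''.1)‖ ≤ ‖c‖ * ‖β (G'.1 - G''.1)‖ := norm_mul_le _ _
          _ ≤ ‖c‖ * (‖β‖ * ‖G'.1 - G''.1‖) :=
              mul_le_mul_of_nonneg_left (β.le_opNorm _) hc0
      _ ≤ 4 * ‖c‖ * (‖c‖ * (M * ‖G'.1 - G''.1‖)) := by
          refine mul_le_mul_of_nonneg_left (mul_le_mul_of_nonneg_left ?_ hc0) (by positivity)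
          exact mul_le_mul_of_nonneg_right hMβ (norm_nonneg _)
      _ = 4*M*‖c‖^2 * ‖G'.1 - G''.1‖ := by ring
    have hzero1 : ‖G'.1 - G''.1‖ = 0 := by
      have hcomb : ‖G'.1 - G''.1‖ ≤ (4*M*‖b‖^2) * (4*M*‖c‖^2) * ‖G'.1 - G''.1‖ := by
        calc ‖G'.1 - G''.1‖ ≤ 4*M*‖b‖^2 * ‖G'.2 - G''.2‖ := hd1
        _ ≤ 4*M*‖b‖^2 * (4*M*‖c‖^2 * ‖G'.1 - G''.1‖) :=
            mul_le_mul_of_nonneg_left hd2 (by positivity)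
        _ = (4*M*‖b‖^2) * (4*M*‖c‖^2) * ‖G'.1 - G''.1‖ := by ring
      have hsmall2 : (4*M*‖b‖^2) * (4*M*‖c‖^2) ≤ 1/2 := by
        have h := mul_le_mul hhalf hhalf (by positivity) (by norm_num)
        nlinarith
      nlinarith [norm_nonneg (G'.1 - G''.1),
        mul_le_mul_of_nonneg_right hsmall2 (norm_nonneg (G'.1 - G''.1))]
    have he1 : G'.1 = G''.1 := by
      have := norm_eq_zero.1 hzero1; exact sub_eq_zero.1 this
    have he2 : G'.2 = G''.2 := by
      rw [he1] at hd2
      have : ‖G'.2 - G''.2‖ ≤ 0 := by simpa using hd2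
      have h0 : ‖G'.2 - G''.2‖ = 0 := le_antisymm this (norm_nonneg _)
      exact sub_eq_zero.1 (norm_eq_zero.1 h0)
    exact Prod.ext he1 he2
  refine ⟨⟨G, hGprop, fun G' hG' => huniq G' G hG' hGprop⟩, ?_⟩
  rintro G ⟨_, h3, h4⟩
  rw [h4] at h3
  exact h3
end
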